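/- Define stacked kinetic cylinders: for $Q = Q_r(z_0)$ with $z_0=(t_0,x_0,v_0)$ and integer $m\ge 1$, let $\bar Q^m = \{(t,x,v): 0 < t-t_0 < mr^2,\ |x - x_0 - (t-t_0)v_0| < (m+2)r^3,\ |v-v_0| < r\}$. Then for any countable family $\{Q_j\}$ of kinetic cylinders, $|\bigcup_j \bar Q_j^m| \ge \frac{m}{m+1}|\bigcup_j Q_j|$. -/

import Mathlib

open MeasureTheory
open scoped ENNReal

/-- A point of the kinetic phase space `ℝ × ℝᵈ × ℝᵈ` (time, position, velocity). -/
abbrev KPt (d : ℕ) := ℝ × EuclideanSpace ℝ (Fin d) × EuclideanSpace ℝ (Fin d)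

/-- The (slanted) kinetic cylinder `Q_r(z₀)` of radius `r` centered at `z₀`. -/
def kSlant (d : ℕ) (r : ℝ) (z₀ : KPt d) : Set (KPt d) :=
  {z | -r ^ 2 < z.1 - z₀.1 ∧ z.1 - z₀.1 ≤ 0 ∧
    ‖z.2.1 - z₀.2.1 - (z.1 - z₀.1) • z₀.2.2‖ < r ^ 3 ∧ ‖z.2.2 - z₀.2.2‖ < r}

/-- The stacked kinetic cylinder `Q̄_r^m(z₀)`. -/
def kStack (d : ℕ) (m : ℕ) (r : ℝ) (z₀ : KPt d) : Set (KPt d) :=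
  {z | 0 < z.1 - z₀.1 ∧ z.1 - z₀.1 < (m : ℝ) * r ^ 2 ∧
    ‖z.2.1 - z₀.2.1 - (z.1 - z₀.1) • z₀.2.2‖ < ((m : ℝ) + 2) * r ^ 3 ∧
    ‖z.2.2 - z₀.2.2‖ < r}

/-!
The shear `(t, x, v) ↦ (t, x - t v, v)` preserves Lebesgue measure. It maps `Q_r(z₀)` into the
product of the time interval `(t₀ - r², t₀]` with a cross-section in `(x, v)`, and the preimage of
the product of `(t₀, t₀ + m r²)` with the same cross-section lies in `Q̄_r^m(z₀)`: the drift
`|(t - t₀)(v - v₀)|` is `< r³` on `Q_r(z₀)` and `< m r³` over the stacked time interval, whence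
the radii `2r³` and `(m + 2) r³`. By Fubini over `(x, v)` it remains to show, for countably many
intervals, `|⋃ (a_j, a_j + m l_j)| ≥ m/(m+1) |⋃ (a_j - l_j, a_j]|`. For finite families one
proves `m |A \ B| ≤ |B|` (`A`, `B` the two unions) by adding the intervals in increasing order of
`a_j`: if some older stack reaches past `a_j`, the part of the new `(a_j - l_j, a_j]` left
uncovered lies to the left of the older interval whose stack reaches furthest, and `m` times its
length is at most what the new stack `(a_j, a_j + m l_j)` adds beyond that reach.
-/

open Set

section StackedIntervals

variable (m : ℕ)

lemma natCast_mul_volume_Ioc_eq (a l : ℝ) :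
    (m : ℝ≥0∞) * volume (Ioc (a - l) a) = volume (Ioo a (a + m * l)) := by
  rw [Real.volume_Ioc, Real.volume_Ioo, ← ENNReal.ofReal_natCast,
    ← ENNReal.ofReal_mul (Nat.cast_nonneg m)]
  congr 1
  ring

lemma natCast_mul_volume_Ioc_diff_le {a₀ l₀ a l : ℝ} (ha : a ≤ a₀) (hcover : a₀ < a + m * l) :
    (m : ℝ≥0∞) * volume (Ioc (a₀ - l₀) a₀ \ (Ioc (a - l) a ∪ Ioo a (a + m * l)))
      ≤ volume (Ico (a + m * l) (a₀ + m * l₀)) := by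
  have hsub : Ioc (a₀ - l₀) a₀ \ (Ioc (a - l) a ∪ Ioo a (a + m * l)) ⊆ Ioc (a₀ - l₀) (a - l) := by
    rintro x ⟨⟨hx₁, hx₂⟩, hx⟩
    refine ⟨hx₁, not_lt.1 fun hlt => hx ?_⟩
    rcases le_or_gt x a with h | h
    · exact Or.inl ⟨hlt, h⟩
    · exact Or.inr ⟨h, by linarith⟩
  calc (m : ℝ≥0∞) * volume (Ioc (a₀ - l₀) a₀ \ (Ioc (a - l) a ∪ Ioo a (a + m * l)))
      ≤ m * volume (Ioc (a₀ - l₀) (a - l)) := by gcongr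
    _ = ENNReal.ofReal (m * (a - l - (a₀ - l₀))) := by
      rw [Real.volume_Ioc, ENNReal.ofReal_mul (Nat.cast_nonneg m), ENNReal.ofReal_natCast]
    _ ≤ ENNReal.ofReal (a₀ + m * l₀ - (a + m * l)) :=
      ENNReal.ofReal_le_ofReal
        (by nlinarith [mul_nonneg (Nat.cast_nonneg (α := ℝ) m) (sub_nonneg.2 ha)])
    _ = volume (Ico (a + m * l) (a₀ + m * l₀)) := (Real.volume_Ico ..).symm

lemma natCast_mul_volume_Ioc_diff_biUnion_le {ι : Type*} (s : Finset ι) (a l : ι → ℝ) {j₀ : ι}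
    (hmax : ∀ k ∈ s, a k ≤ a j₀) :
    (m : ℝ≥0∞) * volume (Ioc (a j₀ - l j₀) (a j₀) \
        ((⋃ k ∈ s, Ioc (a k - l k) (a k)) ∪ ⋃ k ∈ s, Ioo (a k) (a k + m * l k)))
      ≤ volume (Ioo (a j₀) (a j₀ + m * l j₀) \ ⋃ k ∈ s, Ioo (a k) (a k + m * l k)) := by
  by_cases hcover : ∃ k ∈ s, a j₀ < a k + m * l k
  · obtain ⟨k₁, hk₁, hk₁'⟩ := hcover
    obtain ⟨k, hk, hkmax⟩ := s.exists_max_image (fun k => a k + m * l k) ⟨k₁, hk₁⟩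
    have hcover' : a j₀ < a k + m * l k := hk₁'.trans_le (hkmax k₁ hk₁)
    calc (m : ℝ≥0∞) * volume (Ioc (a j₀ - l j₀) (a j₀) \
          ((⋃ k ∈ s, Ioc (a k - l k) (a k)) ∪ ⋃ k ∈ s, Ioo (a k) (a k + m * l k)))
        ≤ m * volume (Ioc (a j₀ - l j₀) (a j₀) \
            (Ioc (a k - l k) (a k) ∪ Ioo (a k) (a k + m * l k))) := by
          gcongr <;> exact fun _ hx => mem_biUnion hk hx
      _ ≤ volume (Ico (a k + m * l k) (a j₀ + m * l j₀)) :=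
          natCast_mul_volume_Ioc_diff_le m (hmax k hk) hcover'
      _ ≤ volume (Ioo (a j₀) (a j₀ + m * l j₀) \ ⋃ k ∈ s, Ioo (a k) (a k + m * l k)) := by
          refine measure_mono fun x hx => ⟨⟨hcover'.trans_le hx.1, hx.2⟩, ?_⟩
          simp only [mem_iUnion, not_exists]
          exact fun k' hk' hx' => by linarith [hx.1, hx'.2, hkmax k' hk']
  · push Not at hcover
    have hdisj : Disjoint (Ioo (a j₀) (a j₀ + m * l j₀)) (⋃ k ∈ s, Ioo (a k) (a k + m * l k)) := by
      simp only [disjoint_iUnion_right]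
      intro k hk
      exact disjoint_left.2 fun x hx hx' => by linarith [hx.1, hx'.2, hcover k hk]
    rw [hdisj.sdiff_eq_left, ← natCast_mul_volume_Ioc_eq]
    gcongr
    exact sdiff_subset

lemma natCast_mul_volume_biUnion_Ioc_diff_le {ι : Type*} (s : Finset ι) (a l : ι → ℝ) :
    (m : ℝ≥0∞) * volume ((⋃ j ∈ s, Ioc (a j - l j) (a j)) \ ⋃ j ∈ s, Ioo (a j) (a j + m * l j))
      ≤ volume (⋃ j ∈ s, Ioo (a j) (a j + m * l j)) := by
  classical
  induction s using Finset.induction_on_max_value a with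
  | empty => simp
  | insert j₀ s _ hmax ih =>
    simp only [Finset.set_biUnion_insert]
    set J := Ioc (a j₀ - l j₀) (a j₀)
    set S := Ioo (a j₀) (a j₀ + m * l j₀)
    set A := ⋃ j ∈ s, Ioc (a j - l j) (a j)
    set B := ⋃ j ∈ s, Ioo (a j) (a j + m * l j)
    have hB : MeasurableSet B := s.measurableSet_biUnion fun _ _ => measurableSet_Ioo
    have hsplit : (J ∪ A) \ (S ∪ B) ⊆ (A \ B) ∪ (J \ (A ∪ B)) := by
      rintro x ⟨hx | hx, hxSB⟩
      · by_cases hxA : x ∈ A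
        · exact Or.inl ⟨hxA, fun h => hxSB (Or.inr h)⟩
        · exact Or.inr ⟨hx, fun h => h.elim hxA fun h => hxSB (Or.inr h)⟩
      · exact Or.inl ⟨hx, fun h => hxSB (Or.inr h)⟩
    calc (m : ℝ≥0∞) * volume ((J ∪ A) \ (S ∪ B))
        ≤ m * volume (A \ B) + m * volume (J \ (A ∪ B)) := by
          rw [← mul_add]
          gcongr
          exact (measure_mono hsplit).trans (measure_union_le _ _)
      _ ≤ volume B + volume (S \ B) :=
          add_le_add ih (natCast_mul_volume_Ioc_diff_biUnion_le m s a l hmax)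
      _ = volume (S ∪ B) := by
          rw [← sdiff_union_self, measure_union disjoint_sdiff_left hB, add_comm]

lemma div_add_one_mul_measure_le {α : Type*} [MeasurableSpace α] {μ : Measure α} {A B : Set α}
    (h : (m : ℝ≥0∞) * μ (A \ B) ≤ μ B) : (m : ℝ≥0∞) / (m + 1) * μ A ≤ μ B := by
  have hA : (m : ℝ≥0∞) * μ A ≤ μ B * (m + 1) :=
    calc (m : ℝ≥0∞) * μ A ≤ m * (μ (A \ B) + μ B) := by
          gcongr
          exact (measure_mono (subset_sdiff_union A B)).trans (measure_union_le _ _)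
      _ ≤ μ B + m * μ B := by rw [mul_add]; gcongr
      _ = μ B * (m + 1) := by ring
  rw [← ENNReal.mul_div_right_comm]
  exact ENNReal.div_le_of_le_mul hA

lemma mul_measure_iUnion_le_of_forall_finset {ι α : Type*} [Countable ι] [MeasurableSpace α]
    {μ : Measure α} {A : ι → Set α} {c b : ℝ≥0∞} (h : ∀ s : Finset ι, c * μ (⋃ j ∈ s, A j) ≤ b) :
    c * μ (⋃ j, A j) ≤ b := by
  have hmono : Monotone fun s : Finset ι => ⋃ j ∈ s, A j := fun s t hst =>
    biUnion_subset_biUnion_left hst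
  rw [iUnion_eq_iUnion_finset, hmono.directed_le.measure_iUnion, ENNReal.mul_iSup]
  exact iSup_le h

theorem stacked_intervals {ι : Type*} [Countable ι] (a l : ι → ℝ) :
    (m : ℝ≥0∞) / (m + 1) * volume (⋃ j, Ioc (a j - l j) (a j))
      ≤ volume (⋃ j, Ioo (a j) (a j + m * l j)) :=
  mul_measure_iUnion_le_of_forall_finset fun s =>
    (div_add_one_mul_measure_le m (natCast_mul_volume_biUnion_Ioc_diff_le m s a l)).trans
      (measure_mono (iUnion₂_subset_iUnion _ _))

theorem stacked_cylinders {Y : Type*} [MeasurableSpace Y] (ν : Measure Y) [SFinite ν]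
    {ι : Type*} [Countable ι] (a l : ι → ℝ) {C : ι → Set Y} (hC : ∀ j, MeasurableSet (C j)) :
    (m : ℝ≥0∞) / (m + 1) * (volume.prod ν) (⋃ j, Ioc (a j - l j) (a j) ×ˢ C j)
      ≤ (volume.prod ν) (⋃ j, Ioo (a j) (a j + m * l j) ×ˢ C j) := by
  have slice (I : ι → Set ℝ) (y : Y) :
      (fun t => (t, y)) ⁻¹' ⋃ j, I j ×ˢ C j = ⋃ j : {j // y ∈ C j}, I j := by
    ext t
    simp [and_comm]
  rw [Measure.prod_apply_symm (.iUnion fun j => measurableSet_Ioc.prod (hC j)),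
    Measure.prod_apply_symm (.iUnion fun j => measurableSet_Ioo.prod (hC j)),
    ← lintegral_const_mul' _ _ (ENNReal.div_lt_top (by simp) (by simp)).ne]
  refine lintegral_mono fun y => ?_
  simp only [slice]
  exact stacked_intervals m (fun j : {j // y ∈ C j} => a j) (fun j => l j)

end StackedIntervals

lemma galilean_shift {E : Type*} [AddCommGroup E] [Module ℝ E] (t t₀ : ℝ) (x x₀ v v₀ : E) :
    x - t • v - x₀ + t₀ • v = (x - x₀ - (t - t₀) • v₀) - (t - t₀) • (v - v₀) := by
  module

lemma norm_smul_lt_mul {E : Type*} [SeminormedAddCommGroup E] [NormedSpace ℝ E] {s a b : ℝ} {w : E}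
    (hs : |s| < a) (hw : ‖w‖ < b) : ‖s • w‖ < a * b := by
  rw [norm_smul, Real.norm_eq_abs]
  exact mul_lt_mul'' hs hw (abs_nonneg s) (norm_nonneg w)

section KineticShear

variable {E : Type*} [NormedAddCommGroup E] [NormedSpace ℝ E] [MeasurableSpace E] [BorelSpace E]
  [SecondCountableTopology E]

def kineticShear (p : ℝ × E × E) : ℝ × E × E := (p.1, p.2.1 - p.1 • p.2.2, p.2.2)

lemma measurePreserving_sub_smul (μ : Measure E) [μ.IsAddRightInvariant] [SFinite μ]
    (μ' : Measure E) [SFinite μ'] (t : ℝ) :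
    MeasurePreserving (fun w : E × E => (w.1 - t • w.2, w.2)) (μ.prod μ') (μ.prod μ') := by
  have skew : MeasurePreserving (fun w : E × E => (w.1, w.2 - t • w.1)) (μ'.prod μ) (μ'.prod μ) :=
    (MeasurePreserving.id μ').skew_product (by fun_prop)
      (.of_forall fun v => (measurePreserving_sub_right μ (t • v)).map_eq)
  exact (Measure.measurePreserving_swap.comp skew).comp Measure.measurePreserving_swap

lemma measurePreserving_kineticShear (ν : Measure ℝ) [SFinite ν] (μ : Measure E)
    [μ.IsAddRightInvariant] [SFinite μ] (μ' : Measure E) [SFinite μ'] :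
    MeasurePreserving kineticShear (ν.prod (μ.prod μ')) (ν.prod (μ.prod μ')) :=
  (MeasurePreserving.id ν).skew_product (by fun_prop)
    (.of_forall fun t => (measurePreserving_sub_smul μ μ' t).map_eq)

end KineticShear

section Kinetic

variable {d : ℕ}

def kCross (d : ℕ) (r : ℝ) (z₀ : KPt d) :
    Set (EuclideanSpace ℝ (Fin d) × EuclideanSpace ℝ (Fin d)) :=
  {w | ‖w.1 - z₀.2.1 + z₀.1 • w.2‖ < 2 * r ^ 3 ∧ ‖w.2 - z₀.2.2‖ < r}

lemma measurableSet_kCross (r : ℝ) (z₀ : KPt d) : MeasurableSet (kCross d r z₀) := by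
  simp only [kCross, ofPred_and]
  exact (measurableSet_lt (by fun_prop) measurable_const).inter
    (measurableSet_lt (by fun_prop) measurable_const)

lemma kSlant_subset_preimage_kineticShear (r : ℝ) (z₀ : KPt d) :
    kSlant d r z₀ ⊆ kineticShear ⁻¹' (Ioc (z₀.1 - r ^ 2) z₀.1 ×ˢ kCross d r z₀) := by
  rintro p ⟨ht₁, ht₂, hx, hv⟩
  have hr : 0 < r := (norm_nonneg _).trans_lt hv
  have hdrift : ‖(p.1 - z₀.1) • (p.2.2 - z₀.2.2)‖ < r ^ 2 * r :=
    norm_smul_lt_mul (abs_lt.2 ⟨ht₁, ht₂.trans_lt (by positivity)⟩) hv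
  simp only [kineticShear, kCross, mem_preimage, mem_prod, mem_Ioc, mem_ofPred_eq]
  refine ⟨⟨by linarith, by linarith⟩, ?_, hv⟩
  rw [galilean_shift]
  calc _ ≤ _ := norm_sub_le _ _
    _ < r ^ 3 + r ^ 2 * r := add_lt_add hx hdrift
    _ = 2 * r ^ 3 := by ring

lemma preimage_kineticShear_subset_kStack (m : ℕ) (r : ℝ) (z₀ : KPt d) :
    kineticShear ⁻¹' (Ioo z₀.1 (z₀.1 + m * r ^ 2) ×ˢ kCross d r z₀) ⊆ kStack d m r z₀ := by
  intro p hp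
  simp only [kineticShear, kCross, mem_preimage, mem_prod, mem_Ioo, mem_ofPred_eq] at hp
  obtain ⟨⟨ht₁, ht₂⟩, hx, hv⟩ := hp
  have hdrift : ‖(p.1 - z₀.1) • (p.2.2 - z₀.2.2)‖ < m * r ^ 2 * r :=
    norm_smul_lt_mul
      (abs_lt.2 ⟨(neg_nonpos.2 (by positivity)).trans_lt (sub_pos.2 ht₁), by linarith⟩) hv
  refine ⟨by linarith, by linarith, ?_, hv⟩
  calc ‖p.2.1 - z₀.2.1 - (p.1 - z₀.1) • z₀.2.2‖
      = ‖(p.2.1 - p.1 • p.2.2 - z₀.2.1 + z₀.1 • p.2.2) + (p.1 - z₀.1) • (p.2.2 - z₀.2.2)‖ := by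
        rw [galilean_shift, sub_add_cancel]
    _ ≤ _ := norm_add_le _ _
    _ < 2 * r ^ 3 + m * r ^ 2 * r := add_lt_add hx hdrift
    _ = (m + 2) * r ^ 3 := by ring

end Kinetic

theorem stmt19_general (d m : ℕ) (ι : Type*) [Countable ι]
    (r : ι → ℝ) (z : ι → KPt d) :
    ((m : ℝ≥0∞) / (m + 1)) * volume (⋃ j, kSlant d (r j) (z j)) ≤
      volume (⋃ j, kStack d m (r j) (z j)) := by
  set W := ⋃ j, Ioc ((z j).1 - r j ^ 2) (z j).1 ×ˢ kCross d (r j) (z j)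
  set W' := ⋃ j, Ioo (z j).1 ((z j).1 + m * r j ^ 2) ×ˢ kCross d (r j) (z j)
  have hW : MeasurableSet W := .iUnion fun j => measurableSet_Ioc.prod (measurableSet_kCross _ _)
  have hW' : MeasurableSet W' := .iUnion fun j => measurableSet_Ioo.prod (measurableSet_kCross _ _)
  have hshear : MeasurePreserving (kineticShear (E := EuclideanSpace ℝ (Fin d))) volume volume := by
    simpa only [← Measure.volume_eq_prod] using measurePreserving_kineticShear volume volume volume
  calc _ ≤ (m : ℝ≥0∞) / (m + 1) * volume (kineticShear ⁻¹' W) := by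
        gcongr
        exact (iUnion_mono fun j => kSlant_subset_preimage_kineticShear _ _).trans
          preimage_iUnion.superset
    _ = (m : ℝ≥0∞) / (m + 1) * volume W := by rw [hshear.measure_preimage hW.nullMeasurableSet]
    _ ≤ volume W' := by
        rw [Measure.volume_eq_prod]
        exact stacked_cylinders m volume _ _ fun j => measurableSet_kCross _ _
    _ = volume (kineticShear ⁻¹' W') := (hshear.measure_preimage hW'.nullMeasurableSet).symm
    _ ≤ _ := by
        rw [preimage_iUnion]
        exact measure_mono (iUnion_mono fun j => preimage_kineticShear_subset_kStack m _ _)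

/-- Overlapping stacked kinetic cylinders: the union of the stacked cylinders has measure
at least `m/(m+1)` times the measure of the union of the original cylinders. -/
theorem stmt19 (d m : ℕ) (hm : 1 ≤ m) (ι : Type*) [Countable ι]
    (r : ι → ℝ) (z : ι → KPt d) (hr : ∀ j, 0 < r j) :
    ((m : ℝ≥0∞) / (m + 1)) * volume (⋃ j, kSlant d (r j) (z j)) ≤
      volume (⋃ j, kStack d m (r j) (z j)) :=
  stmt19_general d m ι r z
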